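/- For orthonormal vectors u, v, w in ℝ⁸ (the octonions), the Cayley 4-form Ψ satisfies Ψ(u, v, w, u×v×w) = 1; i.e., the 4-plane spanned by u, v, w, u×v×w is a Cayley 4-plane calibrated by Ψ. -/

import Mathlib

noncomputable section

/-- The octonions `𝕆 ≅ ℝ⁸`, realized as pairs of quaternions via Cayley–Dickson. -/
abbrev Octonion : Type := Quaternion ℝ × Quaternion ℝ

/-- Octonion multiplication (Cayley–Dickson doubling of the quaternions). -/
def omul (p q : Octonion) : Octonion :=
  (p.1 * q.1 - star q.2 * p.2, q.2 * p.1 + p.2 * star q.1)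

/-- Octonion conjugation. -/
def oconj (p : Octonion) : Octonion := (star p.1, -p.2)

/-- The standard inner product on the octonions `≅ ℝ⁸`. -/
def oinner (p q : Octonion) : ℝ := (p.1 * star q.1).re + (p.2 * star q.2).re

/-- The triple cross product `u×v×w = ½(u(v̄w) − w(v̄u))`. -/
def tcross (u v w : Octonion) : Octonion :=
  (2 : ℝ)⁻¹ • (omul u (omul (oconj v) w) - omul w (omul (oconj v) u))

/-- The Cayley 4-form `Ψ(u,v,w,z) = ⟨u×v×w, z⟩`. -/
def cayleyΨ (u v w z : Octonion) : ℝ := oinner (tcross u v w) z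

/-!
`Ψ(u, v, w, u×v×w)` is the squared norm of `u×v×w = ½(a − b)` with `a = u(v̄w)`, `b = w(v̄u)`.
The composition law `|xy| = |x| |y|` gives `|a| = |b| = |u| |v| |w|`, and its polarization
`⟨xy, zt⟩ + ⟨xt, zy⟩ = 2⟨x, z⟩⟨y, t⟩`, combined with `x(v̄x) = 2⟨x, v⟩x − |x|²v`, computes
`⟨a, b⟩`. Altogether `|u×v×w|²` is the Gram determinant of `u, v, w`, which is `1` for an
orthonormal triple.
-/

lemma oinner_eq_coords (p q : Octonion) : oinner p q =
    p.1.re * q.1.re + p.1.imI * q.1.imI + p.1.imJ * q.1.imJ + p.1.imK * q.1.imK +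
      p.2.re * q.2.re + p.2.imI * q.2.imI + p.2.imJ * q.2.imJ + p.2.imK * q.2.imK := by
  simp only [oinner, Quaternion.re_mul, Quaternion.re_star,
    Quaternion.imI_star, Quaternion.imJ_star, Quaternion.imK_star]
  ring

lemma oinner_comm (p q : Octonion) : oinner p q = oinner q p := by
  simp only [oinner_eq_coords]; ring

lemma oinner_smul_smul (r s : ℝ) (p q : Octonion) :
    oinner (r • p) (s • q) = r * s * oinner p q := by
  simp only [oinner_eq_coords, Prod.smul_fst, Prod.smul_snd, Quaternion.re_smul,
    Quaternion.imI_smul, Quaternion.imJ_smul, Quaternion.imK_smul, smul_eq_mul]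
  ring

lemma oinner_sub_sub (a b c d : Octonion) :
    oinner (a - b) (c - d) = oinner a c - oinner a d - oinner b c + oinner b d := by
  simp only [oinner_eq_coords, Prod.fst_sub, Prod.snd_sub, Quaternion.re_sub,
    Quaternion.imI_sub, Quaternion.imJ_sub, Quaternion.imK_sub]
  ring

lemma oinner_oconj_oconj (p q : Octonion) : oinner (oconj p) (oconj q) = oinner p q := by
  simp only [oinner_eq_coords, oconj, Quaternion.re_star, Quaternion.imI_star,
    Quaternion.imJ_star, Quaternion.imK_star, Quaternion.re_neg, Quaternion.imI_neg,
    Quaternion.imJ_neg, Quaternion.imK_neg]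
  ring

/-- Polarization of the composition law `|ab| = |a| |b|`. -/
lemma oinner_omul_add_oinner_omul (a b c d : Octonion) :
    oinner (omul a b) (omul c d) + oinner (omul a d) (omul c b) =
      2 * oinner a c * oinner b d := by
  simp only [oinner_eq_coords, omul, Quaternion.re_mul, Quaternion.imI_mul,
    Quaternion.imJ_mul, Quaternion.imK_mul, Quaternion.re_sub, Quaternion.imI_sub,
    Quaternion.imJ_sub, Quaternion.imK_sub, Quaternion.re_add, Quaternion.imI_add,
    Quaternion.imJ_add, Quaternion.imK_add, Quaternion.re_star, Quaternion.imI_star,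
    Quaternion.imJ_star, Quaternion.imK_star]
  ring

lemma oinner_omul_omul_left (a b d : Octonion) :
    oinner (omul a b) (omul a d) = oinner a a * oinner b d := by
  linarith [oinner_omul_add_oinner_omul a b a d, oinner_comm (omul a d) (omul a b)]

lemma oinner_omul_self (a b : Octonion) :
    oinner (omul a b) (omul a b) = oinner a a * oinner b b :=
  oinner_omul_omul_left a b b

lemma omul_omul_oconj_self (x v : Octonion) :
    omul x (omul (oconj v) x) = (2 * oinner x v) • x - oinner x x • v := by
  ext <;>
  simp only [oinner_eq_coords, omul, oconj, Prod.fst_sub, Prod.snd_sub, Prod.smul_fst,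
    Prod.smul_snd, Quaternion.re_mul, Quaternion.imI_mul, Quaternion.imJ_mul,
    Quaternion.imK_mul, Quaternion.re_sub, Quaternion.imI_sub, Quaternion.imJ_sub,
    Quaternion.imK_sub, Quaternion.re_add, Quaternion.imI_add, Quaternion.imJ_add,
    Quaternion.imK_add, Quaternion.re_star, Quaternion.imI_star, Quaternion.imJ_star,
    Quaternion.imK_star, Quaternion.re_neg, Quaternion.imI_neg, Quaternion.imJ_neg,
    Quaternion.imK_neg, Quaternion.re_smul, Quaternion.imI_smul, Quaternion.imJ_smul,
    Quaternion.imK_smul, smul_eq_mul] <;>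
  ring

lemma oinner_tcross_self (u v w : Octonion) :
    oinner (tcross u v w) (tcross u v w) =
      !![oinner u u, oinner u v, oinner u w;
        oinner v u, oinner v v, oinner v w;
        oinner w u, oinner w v, oinner w w].det := by
  set a := omul u (omul (oconj v) w)
  set b := omul w (omul (oconj v) u)
  have ha : oinner a a = oinner u u * oinner v v * oinner w w := by
    rw [oinner_omul_self, oinner_omul_self, oinner_oconj_oconj, mul_assoc]
  have hb : oinner b b = oinner u u * oinner v v * oinner w w := by
    rw [oinner_omul_self, oinner_omul_self, oinner_oconj_oconj]; ring
  have hab : oinner a b = 2 * oinner u w * (oinner v v * oinner w u) -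
      oinner ((2 * oinner u v) • u - oinner u u • v) ((2 * oinner w v) • w - oinner w w • v) := by
    have hpolar := oinner_omul_add_oinner_omul u (omul (oconj v) w) w (omul (oconj v) u)
    rw [oinner_omul_omul_left, oinner_oconj_oconj, omul_omul_oconj_self,
      omul_omul_oconj_self] at hpolar
    linarith
  rw [tcross, oinner_smul_smul, oinner_sub_sub, ha, hb, oinner_comm b a, hab, oinner_sub_sub,
    oinner_smul_smul, oinner_smul_smul, oinner_smul_smul, oinner_smul_smul, oinner_comm v u,
    oinner_comm w u, oinner_comm w v]
  simp only [Matrix.det_fin_three, Matrix.of_apply, Matrix.cons_val', Matrix.cons_val_zero,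
    Matrix.cons_val_fin_one, Matrix.cons_val_one, Matrix.cons_val]
  ring

/-- for orthonormal `u, v, w`, the Cayley form satisfies
`Ψ(u, v, w, u×v×w) = 1`, i.e. the span of `u, v, w, u×v×w` is a Cayley 4-plane
calibrated by `Ψ`. -/
theorem cayley_calibrates_cayley_frame (u v w : Octonion)
    (hu : oinner u u = 1) (hv : oinner v v = 1) (hw : oinner w w = 1)
    (huv : oinner u v = 0) (huw : oinner u w = 0) (hvw : oinner v w = 0) :
    cayleyΨ u v w (tcross u v w) = 1 := by
  rw [cayleyΨ, oinner_tcross_self, oinner_comm v u, oinner_comm w u, oinner_comm w v,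
    hu, hv, hw, huv, huw, hvw]
  simp [Matrix.det_fin_three]
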